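/- arXiv:1603.08584 — 3 statements merged into one kernel-verified Lean document; each statement's English description precedes it below -/
import Mathlib

section
/- Let f : ℝ^k → ℝ be twice continuously differentiable with all first and second partial derivatives bounded in magnitude by C_f. Let p̂_1,…,p̂_k be mutually independent random estimators of densities p_1,…,p_k, and for x = (x_1,…,x_k) write B_{p_i}(x_i) = E p̂_i(x_i) − p_i(x_i). Then for every x, |E f(p̂_1(x_1),…,p̂_k(x_k)) − f(p_1(x_1),…,p_k(x_k))| ≤ C_f ( Σ_{i=1}^k |B_{p_i}(x_i)| + Σ_{1 ≤ i < j ≤ k} |B_{p_i}(x_i) B_{p_j}(x_j)| + Σ_{i=1}^k E[(p̂_i(x_i) − p_i(x_i))²] ). -/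
open MeasureTheory Real
open scoped BigOperators ENNReal

noncomputable section

/-- The closed unit cube `[0,1]^ι` inside `ι → ℝ`. -/
def cube (ι : Type*) : Set (ι → ℝ) := Set.Icc 0 1

/-- The boundary of the unit cube. -/
def cubeBoundary (ι : Type*) : Set (ι → ℝ) :=
  {x | x ∈ cube ι ∧ ∃ j, x j = 0 ∨ x j = 1}

/-- Partial derivative in the `j`-th coordinate direction. -/
def pderiv' {ι : Type*} [Fintype ι] [DecidableEq ι] (j : ι) (f : (ι → ℝ) → ℝ) :
    (ι → ℝ) → ℝ :=
  fun x => fderiv ℝ f x (Pi.single j 1)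

/-- Iterated partial derivative `D^js f` along a list `js` of coordinate directions;
a multi-index `i` with `|i| = ℓ` corresponds to any list of length `ℓ` containing each
direction `j` exactly `i j` times. -/
def multiDeriv {ι : Type*} [Fintype ι] [DecidableEq ι] :
    List ι → ((ι → ℝ) → ℝ) → ((ι → ℝ) → ℝ)
  | [], f => f
  | j :: js, f => pderiv' j (multiDeriv js f)

/-- `ℓ = ⌊β⌋`: the greatest integer *strictly* less than `β` (for `β > 0`). -/
def strictFloor (β : ℝ) : ℕ := ⌈β⌉₊ - 1

/-- The `r`-norm `‖v‖_r = (∑ |v j|^r)^{1/r}` on `ι → ℝ`. -/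
def rnorm {ι : Type*} [Fintype ι] (r : ℝ) (v : ι → ℝ) : ℝ :=
  (∑ j, |v j| ^ r) ^ (1 / r)

/-- The bounded Hölder class `C^β_{L,r}([0,1]^ι)`: all partial derivatives of order
`ℓ = ⌊β⌋` are `(β - ℓ)`-Hölder with constant `L` w.r.t. the `r`-norm. -/
def holderClass (β L r : ℝ) (ι : Type*) [Fintype ι] [DecidableEq ι] :
    Set ((ι → ℝ) → ℝ) :=
  {p | ∀ js : List ι, js.length = strictFloor β →
    ∀ x ∈ cube ι, ∀ y ∈ cube ι, x ≠ y →
      |multiDeriv js p x - multiDeriv js p y| ≤ L * rnorm r (x - y) ^ (β - strictFloor β)}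

/-- The class `Σ(β,L,r)` on `[0,1]^ι`: densities in the Hölder class whose partial
derivatives of orders `1,…,ℓ` tend to `0` as the distance to the boundary tends to `0`. -/
def sigmaClass (β L r : ℝ) (ι : Type*) [Fintype ι] [DecidableEq ι] :
    Set ((ι → ℝ) → ℝ) :=
  {p | p ∈ holderClass β L r ι ∧ (∀ x ∈ cube ι, 0 ≤ p x) ∧ (∫ x in cube ι, p x) = 1 ∧
    ∀ js : List ι, 1 ≤ js.length → js.length ≤ strictFloor β →
      ∀ ε > 0, ∃ δ > 0, ∀ x ∈ cube ι,
        Metric.infDist x (cubeBoundary ι) < δ → |multiDeriv js p x| < ε}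

/-- Reflections used to mirror a data point: identity, reflection across `0`,
and reflection across `1`. -/
def reflect : Fin 3 → ℝ → ℝ := fun s y => if s = 0 then y else if s = 1 then -y else 2 - y

/-- The mirrored product-kernel term contributed by one data point `y`:
the sum over all reflected copies of `y` of the product kernel evaluated at `x`. -/
def mirrorTerm {ι : Type*} [Fintype ι] [DecidableEq ι] (K : ℝ → ℝ) (hb : ℝ)
    (y x : ι → ℝ) : ℝ :=
  ∑ s : ι → Fin 3, ∏ j, K ((x j - reflect (s j) (y j)) / hb)

/-- The mirrored kernel density estimator on `[0,1]^ι` with kernel `K`, bandwidth `hb`,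
built from the sample `xs`. -/
def mKDE {ι : Type*} [Fintype ι] [DecidableEq ι] (K : ℝ → ℝ) (hb : ℝ) {n : ℕ}
    (xs : Fin n → ι → ℝ) : (ι → ℝ) → ℝ :=
  fun x => (1 / (n * hb ^ (Fintype.card ι))) * ∑ i, mirrorTerm K hb (xs i) x

/-- The density functional
`F(p₁,…,p_k) = ∫_{[0,1]^{d₁}×⋯×[0,1]^{d_k}} f(p₁(x₁),…,p_k(x_k)) dx`. -/
def DF {k : ℕ} (d : Fin k → ℕ) (f : (Fin k → ℝ) → ℝ)
    (p : ∀ i, (Fin (d i) → ℝ) → ℝ) : ℝ :=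
  ∫ x in Set.univ.pi fun i => cube (Fin (d i)), f fun i => p i (x i)

/-- The measure on `[0,1]^ι ⊆ (ι → ℝ)` with density `p` w.r.t. Lebesgue measure. -/
def densityMeasure {ι : Type*} [Fintype ι] (p : (ι → ℝ) → ℝ) : Measure (ι → ℝ) :=
  (volume.restrict (cube ι)).withDensity fun t => ENNReal.ofReal (p t)

/-- `X` consists of `k` mutually independent samples, the `i`-th being `n` i.i.d. points
drawn from the density `p i` on `[0,1]^{d i}`: the joint law of all `k·n` points is the
corresponding product measure. -/
def IsIIDSample {Ω : Type*} [MeasurableSpace Ω] (μ : Measure Ω) {k n : ℕ}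
    {d : Fin k → ℕ} (X : ∀ i : Fin k, Fin n → Ω → (Fin (d i) → ℝ))
    (p : ∀ i, (Fin (d i) → ℝ) → ℝ) : Prop :=
  (∀ i m, Measurable (X i m)) ∧
    Measure.map (fun ω (i : Fin k) (m : Fin n) => X i m ω) μ =
      Measure.pi fun i => Measure.pi fun _ : Fin n => densityMeasure (p i)

/-- A single family of `n` i.i.d. points drawn from the density `p` on `[0,1]^ι`. -/
def IsIIDSample₁ {Ω : Type*} [MeasurableSpace Ω] (μ : Measure Ω) {n : ℕ} {ι : Type*}
    [Fintype ι] (X : Fin n → Ω → (ι → ℝ)) (p : (ι → ℝ) → ℝ) : Prop :=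
  (∀ m, Measurable (X m)) ∧
    Measure.map (fun ω (m : Fin n) => X m ω) μ =
      Measure.pi fun _ : Fin n => densityMeasure p

/-- The kernel assumptions for the bias bound: `K` is supported on `[-1,1]`, integrates
to `1`, and has vanishing moments of orders `1,…,ℓ = ⌊β⌋`. -/
def KernelOK (K : ℝ → ℝ) (β : ℝ) : Prop :=
  Measurable K ∧ Function.support K ⊆ Set.Icc (-1) 1 ∧
    (∫ u in Set.Icc (-1 : ℝ) 1, K u) = 1 ∧
    ∀ j : ℕ, 1 ≤ j → j ≤ strictFloor β → (∫ u in Set.Icc (-1 : ℝ) 1, u ^ j * K u) = 0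

/-- `‖K‖₁ = ∫_ℝ |K(u)| du`. -/
def K1 (K : ℝ → ℝ) : ℝ := ∫ u, |K u|

/-- Clipping to the interval `[a,b]`. -/
def clip (a b t : ℝ) : ℝ := max a (min b t)


/-- Marginal density of `z` for a joint density on `[0,1]^{dx+dz}`. -/
def margZ' {dx dz : ℕ} (P : (Fin (dx + dz) → ℝ) → ℝ) : (Fin dz → ℝ) → ℝ :=
  fun z => ∫ x in cube (Fin dx), P (Fin.append x z)

/-- The conditional density functional (case `k = 1`):
`F(P) = ∫_Z Pz(z) f( ∫_X g( Pj(x,z)/Pz(z) ) dx ) dz`, where the joint density `Pj`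
and conditioning marginal `Pz` are allowed to be specified separately. -/
def condDF {dx dz : ℕ} (f g : ℝ → ℝ) (Pj : (Fin (dx + dz) → ℝ) → ℝ)
    (Pz : (Fin dz → ℝ) → ℝ) : ℝ :=
  ∫ z in cube (Fin dz), Pz z * f (∫ x in cube (Fin dx), g (Pj (Fin.append x z) / Pz z))

/-- Marginal density of `(x,z)` for a joint density on `[0,1]^{dx+dy+dz}`. -/
def margXZ {dx dy dz : ℕ} (P : (Fin (dx + dy + dz) → ℝ) → ℝ) :
    (Fin (dx + dz) → ℝ) → ℝ :=
  fun w => ∫ y in cube (Fin dy),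
    P (Fin.append (Fin.append (fun j => w (Fin.castAdd dz j)) y)
        (fun j => w (Fin.natAdd dx j)))

/-- Marginal density of `(y,z)` for a joint density on `[0,1]^{dx+dy+dz}`. -/
def margYZ {dx dy dz : ℕ} (P : (Fin (dx + dy + dz) → ℝ) → ℝ) :
    (Fin (dy + dz) → ℝ) → ℝ :=
  fun w => ∫ x in cube (Fin dx),
    P (Fin.append (Fin.append x (fun j => w (Fin.castAdd dz j)))
        (fun j => w (Fin.natAdd dy j)))

/-- Marginal density of `z` for a joint density on `[0,1]^{dx+dy+dz}`. -/
def margZ3 {dx dy dz : ℕ} (P : (Fin (dx + dy + dz) → ℝ) → ℝ) : (Fin dz → ℝ) → ℝ :=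
  fun z => ∫ w in cube (Fin (dx + dy)), P (Fin.append w z)

/-- The Rényi-α conditional mutual information functional, evaluated at (estimates of)
the densities `P(x,y,z)`, `P(x,z)`, `P(y,z)` and `P(z)`. -/
def renyiCMI {dx dy dz : ℕ} (α : ℝ) (Qxyz : (Fin (dx + dy + dz) → ℝ) → ℝ)
    (Qxz : (Fin (dx + dz) → ℝ) → ℝ) (Qyz : (Fin (dy + dz) → ℝ) → ℝ)
    (Qz : (Fin dz → ℝ) → ℝ) : ℝ :=
  (1 / (1 - α)) * ∫ z in cube (Fin dz), Qz z * Real.log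
    (∫ xy in (cube (Fin dx)) ×ˢ (cube (Fin dy)),
      (Qxyz (Fin.append (Fin.append xy.1 xy.2) z) / Qz z) ^ α *
        ((Qxz (Fin.append xy.1 z) * Qyz (Fin.append xy.2 z)) / (Qz z) ^ 2) ^ (1 - α))

end

/-!
Replace the coordinates of `(p₁(x₁), …, p_k(x_k))` by the estimates `p̂ᵢ(xᵢ)` one at a time.
At each step expand `f` to second order in the replaced coordinate only: the first-order term
is `∂ᵢf` at a point built from the other estimators, hence independent of `p̂ᵢ(xᵢ)`, so its
expectation factors into a number bounded by `C_f` times the bias `B_{pᵢ}(xᵢ)`; the remainder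
is at most `C_f (p̂ᵢ(xᵢ) - pᵢ(xᵢ))²`. Summing the steps gives
`C_f ∑ᵢ (|B_{pᵢ}(xᵢ)| + E (p̂ᵢ(xᵢ) - pᵢ(xᵢ))²)`, and the remaining terms of the bound are
nonnegative.
-/

open ProbabilityTheory Function

lemma abs_sub_sub_mul_le_of_hasDerivAt {g g' g'' : ℝ → ℝ} {C : ℝ}
    (hg : ∀ t, HasDerivAt g (g' t) t) (hg' : ∀ t, HasDerivAt g' (g'' t) t)
    (hC : ∀ t, |g'' t| ≤ C) (a b : ℝ) :
    |g a - g b - g' b * (a - b)| ≤ C * (a - b) ^ 2 := by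
  have hg'_lip : ∀ s t, |g' s - g' t| ≤ C * |s - t| := fun s t =>
    convex_univ.norm_image_sub_le_of_norm_hasDerivWithin_le
      (fun u _ => (hg' u).hasDerivWithinAt) (fun u _ => hC u) (Set.mem_univ t) (Set.mem_univ s)
  -- mean value inequality for `t ↦ g t - g' b * t`, whose derivative is `≤ C |a - b|` on `[b, a]`
  have hmvt := (convex_uIcc b a).norm_image_sub_le_of_norm_hasDerivWithin_le
    (f := fun t => g t - g' b * t) (f' := fun t => g' t - g' b) (C := C * |a - b|)
    (fun t _ => ((hg t).sub ((hasDerivAt_id t).const_mul (g' b))).hasDerivWithinAt.congr_deriv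
      (by simp))
    (fun t ht => (hg'_lip t b).trans <|
      mul_le_mul_of_nonneg_left (Set.abs_sub_left_of_mem_uIcc ht) ((abs_nonneg _).trans (hC b)))
    Set.left_mem_uIcc Set.right_mem_uIcc
  calc |g a - g b - g' b * (a - b)| = ‖(g a - g' b * a) - (g b - g' b * b)‖ := by
        rw [Real.norm_eq_abs]; ring_nf
    _ ≤ C * |a - b| * ‖a - b‖ := hmvt
    _ = C * (a - b) ^ 2 := by rw [Real.norm_eq_abs, mul_assoc, ← abs_mul, ← sq, abs_sq]

section PartialDerivatives

variable {ι : Type*} [Fintype ι] [DecidableEq ι]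

lemma ContDiff.pderiv' {m n : WithTop ℕ∞} {f : (ι → ℝ) → ℝ} (hf : ContDiff ℝ n f)
    (hmn : m + 1 ≤ n) (i : ι) : ContDiff ℝ m (pderiv' i f) :=
  (hf.fderiv_right hmn).clm_apply contDiff_const

lemma hasDerivAt_comp_update {f : (ι → ℝ) → ℝ} (hf : Differentiable ℝ f) (y : ι → ℝ) (i : ι)
    (t : ℝ) : HasDerivAt (fun s => f (update y i s)) (pderiv' i f (update y i t)) t :=
  (hf _).hasFDerivAt.comp_hasDerivAt t (hasDerivAt_update y i t)

lemma abs_sub_sub_pderiv'_mul_le {f : (ι → ℝ) → ℝ} {C : ℝ} {i : ι} (hf : ContDiff ℝ 2 f)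
    (hf2 : ∀ x, |pderiv' i (pderiv' i f) x| ≤ C) (y : ι → ℝ) (s t : ℝ) :
    |f (update y i s) - f (update y i t) - pderiv' i f (update y i t) * (s - t)| ≤
      C * (s - t) ^ 2 :=
  abs_sub_sub_mul_le_of_hasDerivAt (hasDerivAt_comp_update (hf.differentiable two_ne_zero) y i)
    (hasDerivAt_comp_update ((hf.pderiv' le_rfl i).differentiable one_ne_zero) y i)
    (fun _ => hf2 _) s t

end PartialDerivatives

section Expectation

variable {Ω : Type*} [MeasurableSpace Ω] {μ : Measure Ω} [IsProbabilityMeasure μ]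

lemma abs_integral_le_of_abs_le {X : Ω → ℝ} {C : ℝ} (hXC : ∀ ω, |X ω| ≤ C) :
    |∫ ω, X ω ∂μ| ≤ C := by
  simpa using norm_integral_le_of_norm_le_const (μ := μ) (f := X) (.of_forall hXC)

lemma abs_integral_mul_add_le {W D R : Ω → ℝ} {C : ℝ}
    (hW : AEStronglyMeasurable W μ) (hWC : ∀ ω, |W ω| ≤ C) (hD : MemLp D 2 μ)
    (hWD : IndepFun W D μ) (hR : AEStronglyMeasurable R μ) (hRC : ∀ ω, |R ω| ≤ C * D ω ^ 2) :
    Integrable (fun ω => W ω * D ω + R ω) μ ∧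
      |∫ ω, (W ω * D ω + R ω) ∂μ| ≤ C * |∫ ω, D ω ∂μ| + C * ∫ ω, D ω ^ 2 ∂μ := by
  have hWD_int : Integrable (fun ω => W ω * D ω) μ :=
    (hD.integrable one_le_two).bdd_mul hW (Filter.Eventually.of_forall hWC)
  have hR_int : Integrable R μ :=
    (hD.integrable_sq.const_mul C).mono' hR (Filter.Eventually.of_forall hRC)
  refine ⟨hWD_int.add hR_int, ?_⟩
  rw [integral_add hWD_int hR_int]
  refine (abs_add_le _ _).trans (add_le_add ?_ ?_)
  · rw [← Pi.mul_def, hWD.integral_mul_eq_mul_integral hW hD.1, abs_mul]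
    exact mul_le_mul_of_nonneg_right (abs_integral_le_of_abs_le hWC) (abs_nonneg _)
  · calc |∫ ω, R ω ∂μ| ≤ ∫ ω, |R ω| ∂μ := abs_integral_le_integral_abs
      _ ≤ ∫ ω, C * D ω ^ 2 ∂μ := integral_mono hR_int.abs (hD.integrable_sq.const_mul C) hRC
      _ = C * ∫ ω, D ω ^ 2 ∂μ := integral_const_mul _ _

end Expectation

lemma ProbabilityTheory.iIndepFun.indepFun_piecewise {ι Ω : Type*} [DecidableEq ι]
    [MeasurableSpace Ω] {μ : Measure Ω} {β : ι → Type*} [∀ i, MeasurableSpace (β i)]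
    {a : ∀ i, Ω → β i} (ha : iIndepFun a μ) (ha_meas : ∀ i, Measurable (a i)) (b : ∀ i, β i)
    {S : Finset ι} {i : ι} (hi : i ∉ S) :
    IndepFun (fun ω => S.piecewise (fun j => a j ω) b) (a i) μ := by
  have hfill : Measurable fun (v : ∀ j : S, β j) (j : ι) => if h : j ∈ S then v ⟨j, h⟩ else b j :=
    measurable_pi_lambda _ fun j => by
      by_cases hj : j ∈ S
      · simpa [hj] using measurable_pi_apply (⟨j, hj⟩ : S)
      · simp [hj]
  exact (ha.indepFun_finset S {i} (Finset.disjoint_singleton_right.2 hi) ha_meas).comp hfill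
    (measurable_pi_apply (⟨i, Finset.mem_singleton_self i⟩ : ({i} : Finset ι)))

section Hybrid

variable {ι : Type*} [Fintype ι] [DecidableEq ι]
  {Ω : Type*} [MeasurableSpace Ω] {μ : Measure Ω} [IsProbabilityMeasure μ]

lemma abs_integral_sub_update_le {f : (ι → ℝ) → ℝ} {C : ℝ} {i : ι} (hf : ContDiff ℝ 2 f)
    (hf1 : ∀ x, |pderiv' i f x| ≤ C) (hf2 : ∀ x, |pderiv' i (pderiv' i f) x| ≤ C)
    {Y : Ω → ι → ℝ} {A : Ω → ℝ} (hY : AEMeasurable Y μ) (hA : MemLp A 2 μ)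
    (hYA : IndepFun Y A μ) (b : ℝ) :
    Integrable (fun ω => f (update (Y ω) i (A ω)) - f (update (Y ω) i b)) μ ∧
      |∫ ω, (f (update (Y ω) i (A ω)) - f (update (Y ω) i b)) ∂μ| ≤
        C * |(∫ ω, A ω ∂μ) - b| + C * ∫ ω, (A ω - b) ^ 2 ∂μ := by
  set W : Ω → ℝ := fun ω => pderiv' i f (update (Y ω) i b)
  set R : Ω → ℝ := fun ω =>
    f (update (Y ω) i (A ω)) - f (update (Y ω) i b) - W ω * (A ω - b) with hR_def
  have hW_cont : Continuous fun y : ι → ℝ => pderiv' i f (update y i b) :=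
    (hf.pderiv' (m := 1) le_rfl i).continuous.comp (continuous_id.update i continuous_const)
  have hW : AEStronglyMeasurable W μ := hW_cont.comp_aestronglyMeasurable hY.aestronglyMeasurable
  have hR : AEStronglyMeasurable R μ := by
    have hfu : Continuous fun p : (ι → ℝ) × ℝ => f (update p.1 i p.2) :=
      hf.continuous.comp (continuous_update i)
    exact ((hfu.comp_aestronglyMeasurable (hY.prodMk hA.1.aemeasurable).aestronglyMeasurable).sub
      (hfu.comp_aestronglyMeasurable (hY.prodMk aemeasurable_const).aestronglyMeasurable)).sub
      (hW.mul (hA.1.sub aestronglyMeasurable_const))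
  have hWD : IndepFun W (fun ω => A ω - b) μ :=
    hYA.comp hW_cont.measurable (measurable_id.sub_const b)
  obtain ⟨hint, hle⟩ := abs_integral_mul_add_le (D := fun ω => A ω - b) hW (fun _ => hf1 _)
    (hA.sub (memLp_const b)) hWD hR (fun ω => abs_sub_sub_pderiv'_mul_le hf hf2 (Y ω) (A ω) b)
  have hsplit : (fun ω => W ω * (A ω - b) + R ω) =
      fun ω => f (update (Y ω) i (A ω)) - f (update (Y ω) i b) := by
    funext ω; rw [hR_def]; ring
  have hmean : ∫ ω, (A ω - b) ∂μ = (∫ ω, A ω ∂μ) - b := by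
    simp [integral_sub (hA.integrable one_le_two) (integrable_const b)]
  rw [← hsplit, ← hmean]
  exact ⟨hint, hle⟩

lemma abs_integral_piecewise_sub_le {f : (ι → ℝ) → ℝ} {C : ℝ} (hf : ContDiff ℝ 2 f)
    (hf1 : ∀ x i, |pderiv' i f x| ≤ C) (hf2 : ∀ x i, |pderiv' i (pderiv' i f) x| ≤ C)
    {a : ι → Ω → ℝ} (ha : iIndepFun a μ) (ha_meas : ∀ i, Measurable (a i))
    (haL2 : ∀ i, MemLp (a i) 2 μ) (b : ι → ℝ) (S : Finset ι) :
    Integrable (fun ω => f (S.piecewise (fun j => a j ω) b)) μ ∧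
      |(∫ ω, f (S.piecewise (fun j => a j ω) b) ∂μ) - f b| ≤
        ∑ i ∈ S, (C * |(∫ ω, a i ω ∂μ) - b i| + C * ∫ ω, (a i ω - b i) ^ 2 ∂μ) := by
  induction S using Finset.induction_on with
  | empty => simp
  | insert i S hi ih =>
    set Y : Ω → ι → ℝ := fun ω => S.piecewise (fun j => a j ω) b with hY_def
    obtain ⟨hint, hle⟩ : Integrable (fun ω => f (Y ω)) μ ∧
        |(∫ ω, f (Y ω) ∂μ) - f b| ≤ _ := ih
    have hY : Measurable Y := measurable_pi_lambda _ fun j => by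
      by_cases hj : j ∈ S <;> simp [hY_def, hj, ha_meas j]
    have hYi : ∀ ω, update (Y ω) i (b i) = Y ω := fun ω => by
      simp [hY_def, Finset.update_piecewise_of_notMem _ _ _ hi]
    have hstep := abs_integral_sub_update_le hf (hf1 · i) (hf2 · i) hY.aemeasurable (haL2 i)
      (ha.indepFun_piecewise ha_meas b hi) (b i)
    simp only [hYi] at hstep
    obtain ⟨hdiff_int, hdiff_le⟩ := hstep
    simp only [Finset.piecewise_insert, Finset.sum_insert hi]
    have hnew_int : Integrable (fun ω => f (update (Y ω) i (a i ω))) μ := by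
      simpa only [Pi.add_def, sub_add_cancel] using hdiff_int.add hint
    refine ⟨hnew_int, ?_⟩
    calc |(∫ ω, f (update (Y ω) i (a i ω)) ∂μ) - f b|
        = |(∫ ω, (f (update (Y ω) i (a i ω)) - f (Y ω)) ∂μ) + ((∫ ω, f (Y ω) ∂μ) - f b)| := by
          rw [integral_sub hnew_int hint]; ring_nf
      _ ≤ _ := (abs_add_le _ _).trans (add_le_add hdiff_le hle)

end Hybrid

/-- **Pointwise Taylor bias bound.** For `f` twice continuously differentiable with all
first and second partial derivatives bounded by `C_f`, and mutually independent random
estimators `p̂₁,…,p̂_k` of the densities `p₁,…,p_k`, writing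
`B_{p_i}(x_i) = E p̂_i(x_i) − p_i(x_i)`, for every `x`:
`|E f(p̂₁(x₁),…,p̂_k(x_k)) − f(p₁(x₁),…,p_k(x_k))| ≤
  C_f (∑_i |B_{p_i}(x_i)| + ∑_{i<j} |B_{p_i}(x_i) B_{p_j}(x_j)|
       + ∑_i E[(p̂_i(x_i) − p_i(x_i))²])`. -/
theorem pointwise_taylor_bias {k : ℕ} (d : Fin k → ℕ) (C_f : ℝ)
    (Ω : Type) [MeasurableSpace Ω] (μ : Measure Ω) [IsProbabilityMeasure μ]
    (f : (Fin k → ℝ) → ℝ) (hf : ContDiff ℝ 2 f)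
    (hf1 : ∀ (x : Fin k → ℝ) (i : Fin k), |pderiv' i f x| ≤ C_f)
    (hf2 : ∀ (x : Fin k → ℝ) (i j : Fin k), |pderiv' j (pderiv' i f) x| ≤ C_f)
    (p : ∀ i, (Fin (d i) → ℝ) → ℝ)
    (phat : ∀ i, Ω → (Fin (d i) → ℝ) → ℝ)
    (hmeas : ∀ i, Measurable (phat i))
    -- mutual independence of the estimators as random elements:
    (hindep : Measure.map (fun ω i => phat i ω) μ =
      Measure.pi fun i => Measure.map (phat i) μ)
    (hL2 : ∀ i t, MemLp (fun ω => phat i ω t) 2 μ)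
    (x : ∀ i, Fin (d i) → ℝ) :
    |(∫ ω, f (fun i => phat i ω (x i)) ∂μ) - f (fun i => p i (x i))| ≤
      C_f * ((∑ i, |(∫ ω, phat i ω (x i) ∂μ) - p i (x i)|) +
        (∑ i, ∑ j ∈ Finset.univ.filter fun j => i < j,
          |((∫ ω, phat i ω (x i) ∂μ) - p i (x i)) *
            ((∫ ω, phat j ω (x j) ∂μ) - p j (x j))|) +
        ∑ i, ∫ ω, (phat i ω (x i) - p i (x i)) ^ 2 ∂μ) := by
  have hindep_eval : iIndepFun (fun i ω => phat i ω (x i)) μ :=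
    ((iIndepFun_iff_map_fun_eq_pi_map fun i => (hmeas i).aemeasurable).2 hindep).comp _
      fun i => measurable_pi_apply (x i)
  have hbound := (abs_integral_piecewise_sub_le hf hf1 (fun y i => hf2 y i i) hindep_eval
    (fun i => (hmeas i).eval) (fun i => hL2 i (x i)) (fun i => p i (x i)) Finset.univ).2
  simp only [Finset.piecewise_univ, Finset.sum_add_distrib, ← Finset.mul_sum] at hbound
  have hcross : 0 ≤ C_f * ∑ i, ∑ j ∈ Finset.univ.filter fun j => i < j,
      |((∫ ω, phat i ω (x i) ∂μ) - p i (x i)) * ((∫ ω, phat j ω (x j) ∂μ) - p j (x j))| := by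
    rw [Finset.mul_sum]
    exact Finset.sum_nonneg fun i _ => mul_nonneg ((abs_nonneg _).trans (hf1 0 i))
      (Finset.sum_nonneg fun _ _ => abs_nonneg _)
  linarith
end

section
/- Let P_1, P_2 : X × Z → ℝ be joint densities on X × Z = [0,1]^{d_x} × [0,1]^{d_z} with marginals P_1(z), P_2(z) bounded below by κ_1 > 0 and joint densities bounded above by κ_2 < ∞. Suppose f and g are continuously differentiable, with C_f = sup_{x ∈ [c_g, C_g]} |f(x)| and C_{f'} = sup_{x ∈ [c_g, C_g]} |f'(x)|, where c_g = inf g([0, κ_2/κ_1]) and C_g = sup g([0, κ_2/κ_1]). Then |F(P_1) − F(P_2)| ≤ ∫_Z C_f |P_1(z) − P_2(z)| + κ_2 C_{f'} | G_{P_1(z)}(P_1(·,z)) − G_{P_2(z)}(P_2(·,z)) | dz, where G_{P(z)}(Q) = ∫_X g(Q(x)/P(z)) dx. -/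
open MeasureTheory Real
open scoped BigOperators ENNReal

/-! With `q_i = P_i(z)` and `A_i = G_{P_i(z)}(P_i(·,z))`, the integrand of `F(P₁) − F(P₂)` splits
as `(q₁ − q₂) f(A₁) + q₂ (f(A₁) − f(A₂))`. The ratios `P_i(x,z)/q_i` lie in `[0, κ₂/κ₁]`, so each
`A_i` is an average over a cube of volume one of values of `g` in `[c_g, C_g]`; hence
`|f(A₁)| ≤ C_f`, and the mean value theorem gives `|f(A₁) − f(A₂)| ≤ C_{f'} |A₁ − A₂|`.
The same bounds make every integrand integrable. -/

open MeasureTheory Set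

section Cube

variable {ι : Type*} [Fintype ι]

lemma measurableSet_cube : MeasurableSet (cube ι) := measurableSet_Icc

lemma volume_cube : volume (cube ι) = 1 := by
  simp [cube, Real.volume_Icc_pi]

lemma append_mem_cube {m n : ℕ} {x : Fin m → ℝ} {z : Fin n → ℝ}
    (hx : x ∈ cube (Fin m)) (hz : z ∈ cube (Fin n)) :
    Fin.append x z ∈ cube (Fin (m + n)) := by
  refine ⟨fun i => ?_, fun i => ?_⟩ <;> induction i using Fin.addCases <;>
    simp only [Fin.append_left, Fin.append_right, Pi.zero_apply, Pi.one_apply]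
  exacts [hx.1 _, hz.1 _, hx.2 _, hz.2 _]

end Cube

lemma measurable_finAppend {α : Type*} [MeasurableSpace α] {m n : ℕ} :
    Measurable fun p : (Fin m → α) × (Fin n → α) => Fin.append p.1 p.2 := by
  refine measurable_pi_lambda _ fun i => ?_
  induction i using Fin.addCases with
  | left j => simp only [Fin.append_left]; fun_prop
  | right j => simp only [Fin.append_right]; fun_prop

section SetIntegral

variable {α : Type*} [MeasurableSpace α] {μ : Measure α} {s : Set α} {h : α → ℝ} {a b : ℝ}

lemma integrableOn_of_mem_Icc (hs : MeasurableSet s) (hμs : μ s < ⊤)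
    (hh : AEStronglyMeasurable h (μ.restrict s)) (hab : ∀ x ∈ s, h x ∈ Icc a b) :
    IntegrableOn h s μ :=
  IntegrableOn.of_bound hμs hh (max |a| |b|) <| ae_restrict_of_forall_mem hs fun x hx =>
    abs_le_max_abs_abs (hab x hx).1 (hab x hx).2

lemma setIntegral_mem_Icc (hs : MeasurableSet s) (hμs : μ s = 1)
    (hh : AEStronglyMeasurable h (μ.restrict s)) (hab : ∀ x ∈ s, h x ∈ Icc a b) :
    ∫ x in s, h x ∂μ ∈ Icc a b := by
  have : IsProbabilityMeasure (μ.restrict s) := ⟨by rw [Measure.restrict_apply_univ, hμs]⟩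
  exact (convex_Icc a b).integral_mem isClosed_Icc (ae_restrict_of_forall_mem hs hab)
    (integrableOn_of_mem_Icc hs (by simp [hμs]) hh hab)

end SetIntegral

lemma abs_mul_sub_mul_le {f : ℝ → ℝ} {K : Set ℝ} {Cf L κ q₁ q₂ a₁ a₂ : ℝ}
    (hf : ∀ t ∈ K, |f t| ≤ Cf) (hlip : ∀ t ∈ K, ∀ u ∈ K, |f t - f u| ≤ L * |t - u|)
    (ha₁ : a₁ ∈ K) (ha₂ : a₂ ∈ K) (hq₂ : |q₂| ≤ κ) :
    |q₁ * f a₁ - q₂ * f a₂| ≤ Cf * |q₁ - q₂| + κ * L * |a₁ - a₂| :=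
  calc |q₁ * f a₁ - q₂ * f a₂| = |(q₁ - q₂) * f a₁ + q₂ * (f a₁ - f a₂)| := by ring_nf
    _ ≤ |q₁ - q₂| * |f a₁| + |q₂| * |f a₁ - f a₂| := by
      rw [← abs_mul, ← abs_mul]; exact abs_add_le _ _
    _ ≤ |q₁ - q₂| * Cf + κ * (L * |a₁ - a₂|) := by
      gcongr
      exacts [hf _ ha₁, (abs_nonneg _).trans hq₂, hlip _ ha₁ _ ha₂]
    _ = Cf * |q₁ - q₂| + κ * L * |a₁ - a₂| := by ring

lemma abs_sub_le_sSup_abs_deriv_mul {f : ℝ → ℝ} (hf : ContDiff ℝ 1 f) {a b t u : ℝ}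
    (ht : t ∈ Icc a b) (hu : u ∈ Icc a b) :
    |f t - f u| ≤ sSup ((fun v => |deriv f v|) '' Icc a b) * |t - u| := by
  have hbdd : BddAbove ((fun v => |deriv f v|) '' Icc a b) :=
    isCompact_Icc.bddAbove_image (hf.continuous_deriv le_rfl).abs.continuousOn
  simpa only [Real.norm_eq_abs] using (convex_Icc a b).norm_image_sub_le_of_norm_deriv_le
    (fun v _ => hf.differentiable one_ne_zero v)
    (fun v hv => le_csSup hbdd (mem_image_of_mem _ hv)) hu ht

lemma abs_setIntegral_mul_comp_sub_le {α : Type*} [MeasurableSpace α] {μ : Measure α}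
    {s : Set α} (hs : MeasurableSet s) (hμs : μ s < ⊤) {q₁ q₂ A₁ A₂ : α → ℝ} {f : ℝ → ℝ}
    {κ c C Cf L : ℝ} (hq₁m : Measurable q₁) (hq₂m : Measurable q₂) (hA₁m : Measurable A₁)
    (hA₂m : Measurable A₂) (hfc : Continuous f)
    (hq₁ : ∀ x ∈ s, q₁ x ∈ Icc 0 κ) (hq₂ : ∀ x ∈ s, q₂ x ∈ Icc 0 κ)
    (hA₁ : ∀ x ∈ s, A₁ x ∈ Icc c C) (hA₂ : ∀ x ∈ s, A₂ x ∈ Icc c C)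
    (hf : ∀ t ∈ Icc c C, |f t| ≤ Cf)
    (hlip : ∀ t ∈ Icc c C, ∀ u ∈ Icc c C, |f t - f u| ≤ L * |t - u|) :
    |(∫ x in s, q₁ x * f (A₁ x) ∂μ) - ∫ x in s, q₂ x * f (A₂ x) ∂μ| ≤
      ∫ x in s, (Cf * |q₁ x - q₂ x| + κ * L * |A₁ x - A₂ x|) ∂μ := by
  have hint : ∀ {q A : α → ℝ}, Measurable q → Measurable A →
      (∀ x ∈ s, q x ∈ Icc 0 κ) → (∀ x ∈ s, A x ∈ Icc c C) →
      IntegrableOn q s μ ∧ IntegrableOn A s μ ∧ IntegrableOn (fun x => q x * f (A x)) s μ :=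
    fun hqm hAm hq hA =>
      have hqi := integrableOn_of_mem_Icc hs hμs hqm.aestronglyMeasurable hq
      ⟨hqi, integrableOn_of_mem_Icc hs hμs hAm.aestronglyMeasurable hA,
        hqi.mul_bdd (hfc.measurable.comp hAm).aestronglyMeasurable
          (ae_restrict_of_forall_mem hs fun x hx => hf _ (hA x hx))⟩
  obtain ⟨hq₁i, hA₁i, h₁i⟩ := hint hq₁m hA₁m hq₁ hA₁
  obtain ⟨hq₂i, hA₂i, h₂i⟩ := hint hq₂m hA₂m hq₂ hA₂
  rw [← integral_sub h₁i h₂i, ← Real.norm_eq_abs]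
  refine norm_integral_le_of_norm_le ?_ (ae_restrict_of_forall_mem hs fun x hx => ?_)
  · exact ((hq₁i.sub hq₂i).abs.const_mul Cf).add ((hA₁i.sub hA₂i).abs.const_mul (κ * L))
  · exact abs_mul_sub_mul_le hf hlip (hA₁ x hx) (hA₂ x hx)
      ((abs_of_nonneg (hq₂ x hx).1).trans_le (hq₂ x hx).2)

section Conditional

variable {dx dz : ℕ} {P : (Fin (dx + dz) → ℝ) → ℝ} {κ₁ κ₂ : ℝ} {z : Fin dz → ℝ}

/-- The paper's `G_{P(z)}(P(·,z))`. -/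
noncomputable def condG (g : ℝ → ℝ) (P : (Fin (dx + dz) → ℝ) → ℝ) (z : Fin dz → ℝ) : ℝ :=
  ∫ x in cube (Fin dx), g (P (Fin.append x z) / margZ' P z)

lemma measurable_margZ' (hP : Measurable P) : Measurable (margZ' P) :=
  (hP.comp (measurable_finAppend.comp measurable_swap)).stronglyMeasurable
    |>.integral_prod_right'.measurable

lemma measurable_condG {g : ℝ → ℝ} (hP : Measurable P) (hg : Measurable g) :
    Measurable (condG g P) :=
  (hg.comp ((hP.comp (measurable_finAppend.comp measurable_swap)).div
    ((measurable_margZ' hP).comp measurable_fst))).stronglyMeasurable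
    |>.integral_prod_right'.measurable

lemma margZ'_mem_Icc (hP : Measurable P) (hpos : ∀ w ∈ cube (Fin (dx + dz)), 0 ≤ P w)
    (hup : ∀ w ∈ cube (Fin (dx + dz)), P w ≤ κ₂) (hz : z ∈ cube (Fin dz)) :
    margZ' P z ∈ Icc 0 κ₂ :=
  setIntegral_mem_Icc measurableSet_cube volume_cube
    (hP.comp (measurable_finAppend.comp measurable_prodMk_right)).aestronglyMeasurable
    fun _ hx => ⟨hpos _ (append_mem_cube hx hz), hup _ (append_mem_cube hx hz)⟩

lemma condG_mem_Icc {g : ℝ → ℝ} {c C : ℝ} (hκ₁ : 0 < κ₁) (hP : Measurable P)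
    (hg : Measurable g) (hpos : ∀ w ∈ cube (Fin (dx + dz)), 0 ≤ P w)
    (hup : ∀ w ∈ cube (Fin (dx + dz)), P w ≤ κ₂) (hlow : ∀ z ∈ cube (Fin dz), κ₁ ≤ margZ' P z)
    (hgc : ∀ t ∈ Icc 0 (κ₂ / κ₁), g t ∈ Icc c C) (hz : z ∈ cube (Fin dz)) :
    condG g P z ∈ Icc c C := by
  refine setIntegral_mem_Icc measurableSet_cube volume_cube
    (hg.comp ((hP.comp (measurable_finAppend.comp measurable_prodMk_right)).div_const _)
      |>.aestronglyMeasurable) fun x hx => hgc _ ?_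
  have hw := append_mem_cube hx hz
  exact ⟨div_nonneg (hpos _ hw) (hκ₁.trans_le (hlow z hz)).le,
    div_le_div₀ ((hpos _ hw).trans (hup _ hw)) (hup _ hw) hκ₁ (hlow z hz)⟩

end Conditional

theorem conditional_functional_stability_general {dx dz : ℕ} (κ₁ κ₂ : ℝ) (hκ₁ : 0 < κ₁)
    (P₁ P₂ : (Fin (dx + dz) → ℝ) → ℝ)
    (hm₁ : Measurable P₁) (hm₂ : Measurable P₂)
    (hpos₁ : ∀ w ∈ cube (Fin (dx + dz)), 0 ≤ P₁ w)
    (hpos₂ : ∀ w ∈ cube (Fin (dx + dz)), 0 ≤ P₂ w)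
    (hlow₁ : ∀ z ∈ cube (Fin dz), κ₁ ≤ margZ' P₁ z)
    (hlow₂ : ∀ z ∈ cube (Fin dz), κ₁ ≤ margZ' P₂ z)
    (hup₁ : ∀ w ∈ cube (Fin (dx + dz)), P₁ w ≤ κ₂)
    (hup₂ : ∀ w ∈ cube (Fin (dx + dz)), P₂ w ≤ κ₂)
    (f g : ℝ → ℝ) (hf : ContDiff ℝ 1 f) (hg : ContDiff ℝ 1 g)
    (cg Cg Cf Cf' : ℝ)
    (hcg : cg = sInf (g '' Set.Icc 0 (κ₂ / κ₁)))
    (hCg : Cg = sSup (g '' Set.Icc 0 (κ₂ / κ₁)))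
    (hCf : Cf = sSup ((fun t => |f t|) '' Set.Icc cg Cg))
    (hCf' : Cf' = sSup ((fun t => |deriv f t|) '' Set.Icc cg Cg)) :
    |condDF f g P₁ (margZ' P₁) - condDF f g P₂ (margZ' P₂)| ≤
      ∫ z in cube (Fin dz),
        (Cf * |margZ' P₁ z - margZ' P₂ z| +
          κ₂ * Cf' *
            |(∫ x in cube (Fin dx), g (P₁ (Fin.append x z) / margZ' P₁ z)) -
              ∫ x in cube (Fin dx), g (P₂ (Fin.append x z) / margZ' P₂ z)|) := by
  have hK : IsCompact (g '' Icc 0 (κ₂ / κ₁)) := isCompact_Icc.image hg.continuous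
  have hg_mem : ∀ t ∈ Icc 0 (κ₂ / κ₁), g t ∈ Icc cg Cg := fun t ht =>
    ⟨hcg ▸ csInf_le hK.bddBelow (mem_image_of_mem g ht),
      hCg ▸ le_csSup hK.bddAbove (mem_image_of_mem g ht)⟩
  have hf_bd : ∀ t ∈ Icc cg Cg, |f t| ≤ Cf := fun t ht =>
    hCf ▸ le_csSup (isCompact_Icc.bddAbove_image hf.continuous.abs.continuousOn)
      (mem_image_of_mem (fun t => |f t|) ht)
  have hf_lip : ∀ t ∈ Icc cg Cg, ∀ u ∈ Icc cg Cg, |f t - f u| ≤ Cf' * |t - u| :=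
    fun t ht u hu => hCf' ▸ abs_sub_le_sSup_abs_deriv_mul hf ht hu
  have hgm := hg.continuous.measurable
  exact abs_setIntegral_mul_comp_sub_le measurableSet_cube (by simp [volume_cube])
    (measurable_margZ' hm₁) (measurable_margZ' hm₂) (measurable_condG hm₁ hgm)
    (measurable_condG hm₂ hgm) hf.continuous
    (fun _ hz => margZ'_mem_Icc hm₁ hpos₁ hup₁ hz) (fun _ hz => margZ'_mem_Icc hm₂ hpos₂ hup₂ hz)
    (fun _ hz => condG_mem_Icc hκ₁ hm₁ hgm hpos₁ hup₁ hlow₁ hg_mem hz)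
    (fun _ hz => condG_mem_Icc hκ₁ hm₂ hgm hpos₂ hup₂ hlow₂ hg_mem hz) hf_bd hf_lip

/-- **Stability of the conditional density functional.** For joint densities `P₁, P₂` on
`[0,1]^{dx} × [0,1]^{dz}` whose `z`-marginals are bounded below by `κ₁ > 0` and whose
joints are bounded above by `κ₂ < ∞`, and continuously differentiable `f, g` with
`C_f = sup_{[c_g,C_g]} |f|`, `C_{f'} = sup_{[c_g,C_g]} |f'|` where
`c_g = inf g([0,κ₂/κ₁])`, `C_g = sup g([0,κ₂/κ₁])`:
`|F(P₁) − F(P₂)| ≤ ∫_Z C_f |P₁(z) − P₂(z)| + κ₂ C_{f'} |G_{P₁(z)}(P₁(·,z)) −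
G_{P₂(z)}(P₂(·,z))| dz`, where `G_{P(z)}(Q) = ∫_X g(Q(x)/P(z)) dx`. -/
theorem conditional_functional_stability {dx dz : ℕ} (κ₁ κ₂ : ℝ) (hκ₁ : 0 < κ₁)
    (P₁ P₂ : (Fin (dx + dz) → ℝ) → ℝ)
    (hm₁ : Measurable P₁) (hm₂ : Measurable P₂)
    (hpos₁ : ∀ w ∈ cube (Fin (dx + dz)), 0 ≤ P₁ w)
    (hpos₂ : ∀ w ∈ cube (Fin (dx + dz)), 0 ≤ P₂ w)
    (hint₁ : IntegrableOn P₁ (cube (Fin (dx + dz))))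
    (hint₂ : IntegrableOn P₂ (cube (Fin (dx + dz))))
    (hden₁ : (∫ w in cube (Fin (dx + dz)), P₁ w) = 1)
    (hden₂ : (∫ w in cube (Fin (dx + dz)), P₂ w) = 1)
    (hlow₁ : ∀ z ∈ cube (Fin dz), κ₁ ≤ margZ' P₁ z)
    (hlow₂ : ∀ z ∈ cube (Fin dz), κ₁ ≤ margZ' P₂ z)
    (hup₁ : ∀ w ∈ cube (Fin (dx + dz)), P₁ w ≤ κ₂)
    (hup₂ : ∀ w ∈ cube (Fin (dx + dz)), P₂ w ≤ κ₂)
    (f g : ℝ → ℝ) (hf : ContDiff ℝ 1 f) (hg : ContDiff ℝ 1 g)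
    (cg Cg Cf Cf' : ℝ)
    (hcg : cg = sInf (g '' Set.Icc 0 (κ₂ / κ₁)))
    (hCg : Cg = sSup (g '' Set.Icc 0 (κ₂ / κ₁)))
    (hCf : Cf = sSup ((fun t => |f t|) '' Set.Icc cg Cg))
    (hCf' : Cf' = sSup ((fun t => |deriv f t|) '' Set.Icc cg Cg)) :
    |condDF f g P₁ (margZ' P₁) - condDF f g P₂ (margZ' P₂)| ≤
      ∫ z in cube (Fin dz),
        (Cf * |margZ' P₁ z - margZ' P₂ z| +
          κ₂ * Cf' *
            |(∫ x in cube (Fin dx), g (P₁ (Fin.append x z) / margZ' P₁ z)) -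
              ∫ x in cube (Fin dx), g (P₂ (Fin.append x z) / margZ' P₂ z)|) :=
  conditional_functional_stability_general κ₁ κ₂ hκ₁ P₁ P₂ hm₁ hm₂ hpos₁ hpos₂ hlow₁ hlow₂ hup₁ hup₂
    f g hf hg cg Cg Cf Cf' hcg hCg hCf hCf'
end

section
/- Let P_1 and P_2 be joint density estimates on [0,1]^{d_x} × [0,1]^{d_z} as in the conditional-functional setting (each a pair of clipped mirrored KDEs of P(x,z) and P(z) with values in [κ_1, κ_2], computed from split samples of size n each), differing in exactly one data point, and let g be continuously differentiable on [0, κ_2/κ_1]. Then ∫_Z | G_{P_1(z)}(P_1(·,z)) − G_{P_2(z)}(P_2(·,z)) | dz ≤ C_V/n, where G_{P(z)}(Q) = ∫_X g(Q(x)/P(z)) dx and C_V depends on sup_{x ∈ [κ_1/κ_2, κ_2/κ_1]} |g'(x)| and ‖K‖_1. -/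
open MeasureTheory Real
open scoped BigOperators ENNReal

/-! The inner functional sees the estimates only through the ratio of clipped values, which lies
in `[κ₁/κ₂, κ₂/κ₁]`. There `g` is Lipschitz, being `C¹` on a compact interval, and the ratio is
Lipschitz in the numerator and the denominator with constants `1/κ₁` and `κ₂/κ₁²` (clipping is
`1`-Lipschitz). By Fubini, the `L¹(Z)` distance of the inner functionals is therefore controlled
by the `L¹` distances of the two joint and the two marginal estimates. Resampling one data point
changes a mirrored KDE by `1/(n hᵈ)` times a difference of two mirrored kernel terms, each of
`L¹` norm at most `3ᵈ (h ‖K‖₁)ᵈ`, so both distances are `O(1/n)`. -/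

open Set Finset
open scoped NNReal

section Clip

variable {a b κ₁ κ₂ : ℝ}

lemma clip_mem (hab : a ≤ b) (t : ℝ) : clip a b t ∈ Icc a b :=
  ⟨le_max_left _ _, max_le hab (min_le_left _ _)⟩

lemma continuous_clip (a b : ℝ) : Continuous (clip a b) :=
  continuous_const.max (continuous_const.min continuous_id)

lemma abs_clip_sub_clip_le (a b s t : ℝ) : |clip a b s - clip a b t| ≤ |s - t| := by
  unfold clip
  calc |max a (min b s) - max a (min b t)|
      = |max (min b s) a - max (min b t) a| := by rw [max_comm a, max_comm a]
    _ ≤ |min b s - min b t| := abs_max_sub_max_le_abs _ _ _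
    _ ≤ max |b - b| |s - t| := abs_min_sub_min_le_max _ _ _ _
    _ = |s - t| := by simp

lemma div_mem_Icc_div {q p : ℝ} (hκ₁ : 0 < κ₁) (hq : q ∈ Icc κ₁ κ₂) (hp : p ∈ Icc κ₁ κ₂) :
    q / p ∈ Icc (κ₁ / κ₂) (κ₂ / κ₁) := by
  have hq0 : 0 < q := hκ₁.trans_le hq.1
  exact ⟨div_le_div₀ hq0.le hq.1 (hκ₁.trans_le hp.1) hp.2,
    div_le_div₀ (hq0.le.trans hq.2) hq.2 hκ₁ hp.1⟩

lemma abs_div_sub_div_le {q₁ q₂ p₁ p₂ : ℝ} (hκ₁ : 0 < κ₁) (hq₂ : q₂ ∈ Icc κ₁ κ₂)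
    (hp₁ : p₁ ∈ Icc κ₁ κ₂) (hp₂ : p₂ ∈ Icc κ₁ κ₂) :
    |q₁ / p₁ - q₂ / p₂| ≤ |q₁ - q₂| / κ₁ + κ₂ * |p₁ - p₂| / κ₁ ^ 2 := by
  have hp₁0 : 0 < p₁ := hκ₁.trans_le hp₁.1
  have hp₂0 : 0 < p₂ := hκ₁.trans_le hp₂.1
  have hq₂0 : 0 ≤ q₂ := (hκ₁.trans_le hq₂.1).le
  have hsplit : q₁ / p₁ - q₂ / p₂ = (q₁ - q₂) / p₁ + q₂ / (p₁ * p₂) * (p₂ - p₁) := by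
    field_simp
    ring
  have hcoef : q₂ / (p₁ * p₂) ≤ κ₂ / κ₁ ^ 2 :=
    div_le_div₀ (hκ₁.le.trans (hq₂.1.trans hq₂.2)) hq₂.2 (by positivity)
      (sq κ₁ ▸ mul_le_mul hp₁.1 hp₂.1 hκ₁.le hp₁0.le)
  calc |q₁ / p₁ - q₂ / p₂| ≤ |q₁ - q₂| / p₁ + q₂ / (p₁ * p₂) * |p₂ - p₁| := by
        rw [hsplit]
        refine (abs_add_le _ _).trans_eq ?_
        rw [abs_div, abs_of_pos hp₁0, abs_mul,
          abs_of_nonneg (div_nonneg hq₂0 (mul_pos hp₁0 hp₂0).le)]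
    _ ≤ |q₁ - q₂| / κ₁ + κ₂ / κ₁ ^ 2 * |p₂ - p₁| := by
        gcongr
        exact hp₁.1
    _ = |q₁ - q₂| / κ₁ + κ₂ * |p₁ - p₂| / κ₁ ^ 2 := by rw [abs_sub_comm p₂]; ring

lemma clip_div_clip_mem (hκ₁ : 0 < κ₁) (hκ : κ₁ ≤ κ₂) (q p : ℝ) :
    clip κ₁ κ₂ q / clip κ₁ κ₂ p ∈ Icc (κ₁ / κ₂) (κ₂ / κ₁) :=
  div_mem_Icc_div hκ₁ (clip_mem hκ q) (clip_mem hκ p)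

lemma abs_clip_div_clip_sub_le (hκ₁ : 0 < κ₁) (hκ : κ₁ ≤ κ₂) (q₁ q₂ p₁ p₂ : ℝ) :
    |clip κ₁ κ₂ q₁ / clip κ₁ κ₂ p₁ - clip κ₁ κ₂ q₂ / clip κ₁ κ₂ p₂| ≤
      |q₁ - q₂| / κ₁ + κ₂ * |p₁ - p₂| / κ₁ ^ 2 := by
  refine (abs_div_sub_div_le hκ₁ (clip_mem hκ q₂) (clip_mem hκ p₁) (clip_mem hκ p₂)).trans ?_
  have hκ₂ : 0 ≤ κ₂ := (hκ₁.trans_le hκ).le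
  gcongr ?_ / _ + _ * ?_ / _ <;> exact abs_clip_sub_clip_le _ _ _ _

end Clip

section MirroredKDE

variable {ι : Type*} [Fintype ι] [DecidableEq ι] {K : ℝ → ℝ} {h : ℝ}

lemma integral_abs_comp_sub_div (K : ℝ → ℝ) (hh : 0 < h) (c : ℝ) :
    ∫ t : ℝ, |K ((t - c) / h)| = h * K1 K := by
  rw [integral_sub_right_eq_self (fun t => |K (t / h)|) c,
    Measure.integral_comp_div (fun u => |K u|) h, smul_eq_mul, abs_of_pos hh, K1]

lemma measurable_mKDE (hKm : Measurable K) (h : ℝ) {n : ℕ} (xs : Fin n → ι → ℝ) :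
    Measurable (mKDE K h xs) := by
  unfold mKDE mirrorTerm
  fun_prop

lemma integrable_mirrorTerm (hKi : Integrable K) (hh : h ≠ 0) (y : ι → ℝ) :
    Integrable (mirrorTerm K h y) :=
  integrable_finsetSum _ fun _ _ =>
    Integrable.fintype_prod fun _ => (hKi.comp_div hh).comp_sub_right _

lemma integrable_mKDE (hKi : Integrable K) (hh : h ≠ 0) {n : ℕ} (xs : Fin n → ι → ℝ) :
    Integrable (mKDE K h xs) :=
  (integrable_finsetSum _ fun i _ => integrable_mirrorTerm hKi hh (xs i)).const_mul _

lemma integral_abs_mirrorTerm_le (hKi : Integrable K) (hh : 0 < h) (y : ι → ℝ) :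
    ∫ x, |mirrorTerm K h y x| ≤ 3 ^ Fintype.card ι * (h * K1 K) ^ Fintype.card ι := by
  have hterm : ∀ s : ι → Fin 3,
      Integrable fun x : ι → ℝ => ∏ j, |K ((x j - reflect (s j) (y j)) / h)| :=
    fun s => Integrable.fintype_prod fun _ => ((hKi.comp_div hh.ne').comp_sub_right _).abs
  calc ∫ x, |mirrorTerm K h y x|
      ≤ ∫ x : ι → ℝ, ∑ s : ι → Fin 3, ∏ j, |K ((x j - reflect (s j) (y j)) / h)| := by
        refine integral_mono_of_nonneg (ae_of_all _ fun _ => abs_nonneg _)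
          (integrable_finsetSum _ fun s _ => hterm s) (ae_of_all _ fun x => ?_)
        refine (abs_sum_le_sum_abs _ _).trans_eq (sum_congr rfl fun s _ => ?_)
        exact abs_prod _ _
    _ = ∑ _s : ι → Fin 3, (h * K1 K) ^ Fintype.card ι := by
        rw [integral_finsetSum _ fun s _ => hterm s]
        refine sum_congr rfl fun s _ => ?_
        rw [integral_fintype_prod_volume_eq_prod (fun j t => |K ((t - reflect (s j) (y j)) / h)|)]
        simp only [integral_abs_comp_sub_div K hh, prod_const, card_univ]
    _ = 3 ^ Fintype.card ι * (h * K1 K) ^ Fintype.card ι := by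
        simp

lemma mKDE_sub_mKDE {n : ℕ} {xs ys : Fin n → ι → ℝ} {i₀ : Fin n}
    (hxy : ∀ m, m ≠ i₀ → xs m = ys m) (x : ι → ℝ) :
    mKDE K h xs x - mKDE K h ys x = 1 / (n * h ^ Fintype.card ι) *
      (mirrorTerm K h (xs i₀) x - mirrorTerm K h (ys i₀) x) := by
  unfold mKDE
  rw [← mul_sub, ← sum_sub_distrib,
    sum_eq_single_of_mem i₀ (mem_univ _) fun m _ hm => by rw [hxy m hm, sub_self]]

theorem integral_abs_mKDE_sub_mKDE_le (hKi : Integrable K) (hh : 0 < h) {n : ℕ}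
    {xs ys : Fin n → ι → ℝ} {i₀ : Fin n} (hxy : ∀ m, m ≠ i₀ → xs m = ys m) :
    ∫ x, |mKDE K h xs x - mKDE K h ys x| ≤
      2 * 3 ^ Fintype.card ι * K1 K ^ Fintype.card ι / n := by
  set c : ℝ := 1 / (n * h ^ Fintype.card ι)
  have hn : (0 : ℝ) < n := by exact_mod_cast i₀.pos
  have hc : 0 ≤ c := by positivity
  have hint := fun y : ι → ℝ => (integrable_mirrorTerm (K := K) hKi hh.ne' y).abs
  calc ∫ x, |mKDE K h xs x - mKDE K h ys x|
      ≤ ∫ x, c * (|mirrorTerm K h (xs i₀) x| + |mirrorTerm K h (ys i₀) x|) := by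
        refine integral_mono_of_nonneg (ae_of_all _ fun _ => abs_nonneg _)
          (((hint _).add (hint _)).const_mul c) (ae_of_all _ fun x => ?_)
        dsimp only
        rw [mKDE_sub_mKDE hxy, abs_mul, abs_of_nonneg hc]
        exact mul_le_mul_of_nonneg_left (abs_sub _ _) hc
    _ ≤ c * (3 ^ Fintype.card ι * (h * K1 K) ^ Fintype.card ι +
          3 ^ Fintype.card ι * (h * K1 K) ^ Fintype.card ι) := by
        rw [integral_const_mul, integral_add (hint _) (hint _)]
        gcongr <;> exact integral_abs_mirrorTerm_le hKi hh _
    _ = 2 * 3 ^ Fintype.card ι * K1 K ^ Fintype.card ι / n := by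
        simp only [c]
        field_simp
        ring

end MirroredKDE

section LipschitzIntegral

variable {α : Type*} [MeasurableSpace α] {μ : Measure α} {g : ℝ → ℝ} {M : ℝ≥0}

theorem abs_integral_comp_sub_le_of_lipschitzOnWith [IsFiniteMeasure μ] {s : Set ℝ}
    (hs : Bornology.IsBounded s) (hg : LipschitzOnWith M g s) {f₁ f₂ : α → ℝ}
    (hf₁ : AEStronglyMeasurable f₁ μ) (hf₂ : AEStronglyMeasurable f₂ μ)
    (h₁ : ∀ x, f₁ x ∈ s) (h₂ : ∀ x, f₂ x ∈ s) :
    |∫ x, g (f₁ x) ∂μ - ∫ x, g (f₂ x) ∂μ| ≤ M * ∫ x, |f₁ x - f₂ x| ∂μ := by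
  -- Extending `g` to a globally Lipschitz `G` makes `G ∘ fᵢ` measurable.
  obtain ⟨G, hG, hgG⟩ := hg.extend_real
  obtain ⟨C, hC⟩ := (hG.isBounded_image hs).exists_norm_le
  obtain ⟨D, hD⟩ := hs.exists_norm_le
  have hGf : ∀ f : α → ℝ, AEStronglyMeasurable f μ → (∀ x, f x ∈ s) →
      Integrable (fun x => G (f x)) μ := fun f hf hfs =>
    .of_bound (hG.continuous.comp_aestronglyMeasurable hf) C
      (ae_of_all _ fun x => hC _ (mem_image_of_mem G (hfs x)))
  have hdiff : Integrable (fun x => f₁ x - f₂ x) μ :=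
    .of_bound (hf₁.sub hf₂) (D + D) (ae_of_all _ fun x =>
      (norm_sub_le _ _).trans (add_le_add (hD _ (h₁ x)) (hD _ (h₂ x))))
  simp only [fun x => hgG (h₁ x), fun x => hgG (h₂ x)]
  rw [← integral_sub (hGf f₁ hf₁ h₁) (hGf f₂ hf₂ h₂), ← integral_const_mul]
  refine (abs_integral_le_integral_abs).trans (integral_mono_of_nonneg
    (ae_of_all _ fun _ => abs_nonneg _) (hdiff.abs.const_mul _) (ae_of_all _ fun x => ?_))
  simpa only [← Real.dist_eq] using hG.dist_le_mul (f₁ x) (f₂ x)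

theorem abs_integral_comp_clip_div_sub_le [IsProbabilityMeasure μ] {κ₁ κ₂ : ℝ}
    (hκ₁ : 0 < κ₁) (hκ : κ₁ ≤ κ₂) (hg : LipschitzOnWith M g (Icc (κ₁ / κ₂) (κ₂ / κ₁)))
    {q₁ q₂ : α → ℝ} (hq₁ : AEMeasurable q₁ μ) (hq₂ : AEMeasurable q₂ μ)
    (hq : Integrable (fun x => q₁ x - q₂ x) μ) (p₁ p₂ : ℝ) :
    |∫ x, g (clip κ₁ κ₂ (q₁ x) / clip κ₁ κ₂ p₁) ∂μ -
        ∫ x, g (clip κ₁ κ₂ (q₂ x) / clip κ₁ κ₂ p₂) ∂μ| ≤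
      M * ((∫ x, |q₁ x - q₂ x| ∂μ) / κ₁ + κ₂ * |p₁ - p₂| / κ₁ ^ 2) := by
  have hratio : ∀ {q : α → ℝ}, AEMeasurable q μ → (p : ℝ) →
      AEStronglyMeasurable (fun x => clip κ₁ κ₂ (q x) / clip κ₁ κ₂ p) μ := fun hq' _ =>
    (((continuous_clip κ₁ κ₂).measurable.comp_aemeasurable hq').div_const _).aestronglyMeasurable
  refine (abs_integral_comp_sub_le_of_lipschitzOnWith (Metric.isBounded_Icc _ _) hg
    (hratio hq₁ p₁) (hratio hq₂ p₂) (fun _ => clip_div_clip_mem hκ₁ hκ _ _)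
    (fun _ => clip_div_clip_mem hκ₁ hκ _ _)).trans ?_
  gcongr
  calc ∫ x, |clip κ₁ κ₂ (q₁ x) / clip κ₁ κ₂ p₁ - clip κ₁ κ₂ (q₂ x) / clip κ₁ κ₂ p₂| ∂μ
      ≤ ∫ x, (|q₁ x - q₂ x| / κ₁ + κ₂ * |p₁ - p₂| / κ₁ ^ 2) ∂μ :=
        integral_mono_of_nonneg (ae_of_all _ fun _ => abs_nonneg _)
          ((hq.abs.div_const _).add (integrable_const _))
          (ae_of_all _ fun x => abs_clip_div_clip_sub_le hκ₁ hκ _ _ _ _)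
    _ = (∫ x, |q₁ x - q₂ x| ∂μ) / κ₁ + κ₂ * |p₁ - p₂| / κ₁ ^ 2 := by
        rw [integral_add (hq.abs.div_const _) (integrable_const _), integral_div,
          integral_const, probReal_univ, one_smul]

end LipschitzIntegral

section FinAppend

variable {α : Type*} [MeasurableSpace α] {m n : ℕ}

def MeasurableEquiv.finAppend (α : Type*) [MeasurableSpace α] (m n : ℕ) :
    (Fin m → α) × (Fin n → α) ≃ᵐ (Fin (m + n) → α) :=
  (MeasurableEquiv.sumPiEquivProdPi fun _ => α).symm.trans
    (MeasurableEquiv.piCongrLeft (fun _ => α) finSumFinEquiv)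

@[simp]
lemma MeasurableEquiv.finAppend_apply (p : (Fin m → α) × (Fin n → α)) :
    MeasurableEquiv.finAppend α m n p = Fin.append p.1 p.2 := by
  funext i
  refine Fin.addCases (fun j => ?_) (fun j => ?_) i
  · rw [Fin.append_left]
    exact MeasurableEquiv.piCongrLeft_apply_apply (β := fun _ => α) finSumFinEquiv _ (.inl j)
  · rw [Fin.append_right]
    exact MeasurableEquiv.piCongrLeft_apply_apply (β := fun _ => α) finSumFinEquiv _ (.inr j)

lemma measurePreserving_finAppend (μ : Measure α) [SigmaFinite μ] :
    MeasurePreserving (MeasurableEquiv.finAppend α m n)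
      ((Measure.pi fun _ => μ).prod (Measure.pi fun _ => μ)) (Measure.pi fun _ => μ) :=
  (measurePreserving_piCongrLeft (fun _ => μ) finSumFinEquiv).comp
    (measurePreserving_sumPiEquivProdPi_symm fun _ => μ)

lemma volume_measurePreserving_finAppend (β : Type*) [MeasureSpace β]
    [SigmaFinite (volume : Measure β)] :
    MeasurePreserving (MeasurableEquiv.finAppend β m n) :=
  measurePreserving_finAppend volume

end FinAppend

section FinAppendIntegral

variable {m n : ℕ} {f : (Fin (m + n) → ℝ) → ℝ}

lemma integrable_comp_append_swap (hf : Integrable f) :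
    Integrable fun p : (Fin n → ℝ) × (Fin m → ℝ) => f (Fin.append p.2 p.1) := by
  have := ((volume_measurePreserving_finAppend ℝ).integrable_comp_emb
    (MeasurableEquiv.measurableEmbedding _)).2 hf
  rw [Measure.volume_eq_prod] at this ⊢
  simpa [Function.comp_def] using this.swap

lemma setIntegral_setIntegral_abs_append_le (hf : Integrable f) (s : Set (Fin n → ℝ))
    (t : Set (Fin m → ℝ)) :
    ∫ z in s, ∫ x in t, |f (Fin.append x z)| ≤ ∫ y, |f y| := by
  have hF := (integrable_comp_append_swap hf).abs
  calc ∫ z in s, ∫ x in t, |f (Fin.append x z)|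
      = ∫ p in s ×ˢ t, |f (Fin.append p.2 p.1)| := (setIntegral_prod _ hF.integrableOn).symm
    _ ≤ ∫ p : (Fin n → ℝ) × (Fin m → ℝ), |f (Fin.append p.2 p.1)| :=
        setIntegral_le_integral hF (ae_of_all _ fun _ => abs_nonneg _)
    _ = ∫ y, |f y| := by
        have := (volume_measurePreserving_finAppend ℝ).integral_comp' (fun y => |f y|)
        rw [Measure.volume_eq_prod] at this ⊢
        rw [← integral_prod_swap]
        simpa using this

end FinAppendIntegral

instance isProbabilityMeasure_restrict_cube (ι : Type*) [Fintype ι] :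
    IsProbabilityMeasure (volume.restrict (cube ι)) :=
  ⟨by simp [cube, Real.volume_Icc_pi]⟩

theorem integral_abs_innerFunctional_sub_le {dx dz : ℕ} {κ₁ κ₂ : ℝ} (hκ₁ : 0 < κ₁)
    (hκ : κ₁ ≤ κ₂) {g : ℝ → ℝ} {M : ℝ≥0} (hg : LipschitzOnWith M g (Icc (κ₁ / κ₂) (κ₂ / κ₁)))
    {Q₁ Q₂ : (Fin (dx + dz) → ℝ) → ℝ} {P₁ P₂ : (Fin dz → ℝ) → ℝ}
    (hQ₁ : Measurable Q₁) (hQ₂ : Measurable Q₂)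
    (hQ : Integrable fun y => Q₁ y - Q₂ y) (hP : Integrable fun z => P₁ z - P₂ z) :
    ∫ z in cube (Fin dz),
        |(∫ x in cube (Fin dx), g (clip κ₁ κ₂ (Q₁ (Fin.append x z)) / clip κ₁ κ₂ (P₁ z))) -
          ∫ x in cube (Fin dx), g (clip κ₁ κ₂ (Q₂ (Fin.append x z)) / clip κ₁ κ₂ (P₂ z))| ≤
      M * ((∫ y, |Q₁ y - Q₂ y|) / κ₁ + κ₂ * (∫ z, |P₁ z - P₂ z|) / κ₁ ^ 2) := by
  set X := cube (Fin dx)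
  set Z := cube (Fin dz)
  have hsec : Integrable (fun p : (Fin dz → ℝ) × (Fin dx → ℝ) =>
      Q₁ (Fin.append p.2 p.1) - Q₂ (Fin.append p.2 p.1))
      ((volume.restrict Z).prod (volume.restrict X)) := by
    rw [Measure.prod_restrict]
    exact (integrable_comp_append_swap hQ).restrict
  have happend : ∀ z : Fin dz → ℝ, Measurable fun x : Fin dx → ℝ => Fin.append x z :=
    fun z => by fun_prop
  have hbound : Integrable (fun z => M * ((∫ x in X, |Q₁ (Fin.append x z) - Q₂ (Fin.append x z)|)
      / κ₁ + κ₂ * |P₁ z - P₂ z| / κ₁ ^ 2)) (volume.restrict Z) :=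
    ((hsec.abs.integral_prod_left.div_const _).add
      ((hP.abs.restrict.const_mul κ₂).div_const _)).const_mul _
  calc _ ≤ ∫ z in Z, M * ((∫ x in X, |Q₁ (Fin.append x z) - Q₂ (Fin.append x z)|) / κ₁ +
          κ₂ * |P₁ z - P₂ z| / κ₁ ^ 2) :=
        integral_mono_of_nonneg (ae_of_all _ fun _ => abs_nonneg _) hbound
          (hsec.prod_right_ae.mono fun z hz => abs_integral_comp_clip_div_sub_le hκ₁ hκ hg
            (hQ₁.comp (happend z)).aemeasurable (hQ₂.comp (happend z)).aemeasurable hz _ _)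
    _ = M * ((∫ z in Z, ∫ x in X, |Q₁ (Fin.append x z) - Q₂ (Fin.append x z)|) / κ₁ +
          κ₂ * (∫ z in Z, |P₁ z - P₂ z|) / κ₁ ^ 2) := by
        rw [integral_const_mul, integral_add (hsec.abs.integral_prod_left.div_const _)
          ((hP.abs.restrict.const_mul κ₂).div_const _), integral_div, integral_div,
          integral_const_mul]
    _ ≤ M * ((∫ y, |Q₁ y - Q₂ y|) / κ₁ + κ₂ * (∫ z, |P₁ z - P₂ z|) / κ₁ ^ 2) := by
        have hκ₂ : 0 ≤ κ₂ := (hκ₁.trans_le hκ).le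
        gcongr _ * (?_ / _ + _ * ?_ / _)
        · exact setIntegral_setIntegral_abs_append_le (f := fun y => Q₁ y - Q₂ y) hQ Z X
        · exact setIntegral_le_integral hP.abs (ae_of_all _ fun _ => abs_nonneg _)

/-- **Stability of the inner conditional functional.** Let `(Q₁, Pz₁)` and `(Q₂, Pz₂)`
be pairs of clipped mirrored KDE estimates of `P(x,z)` and `P(z)` (values in
`[κ₁,κ₂]`), computed from split samples of size `n` each, differing in exactly one data
point, and let `g` be continuously differentiable on `[0, κ₂/κ₁]`. Then
`∫_Z |G_{P₁(z)}(P₁(·,z)) − G_{P₂(z)}(P₂(·,z))| dz ≤ C_V/n`, where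
`G_{P(z)}(Q) = ∫_X g(Q(x)/P(z)) dx` and `C_V` depends on
`sup_{[κ₁/κ₂,κ₂/κ₁]} |g'|` and `‖K‖₁`. -/
theorem inner_functional_stability {dx dz : ℕ} (κ₁ κ₂ : ℝ) (hκ₁ : 0 < κ₁)
    (hκ : κ₁ ≤ κ₂) (g : ℝ → ℝ) (hg : ContDiffOn ℝ 1 g (Set.Icc 0 (κ₂ / κ₁)))
    (K : ℝ → ℝ) (hKm : Measurable K) (hKi : Integrable K) :
    ∃ C_V : ℝ, ∀ n : ℕ, 1 ≤ n → ∀ h : ℝ, 0 < h →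
      ∀ (W₁ W₂ : Fin n → (Fin (dx + dz) → ℝ)) (Z₁ Z₂ : Fin n → (Fin dz → ℝ)),
      -- the two pairs of samples differ in exactly one data point:
      ((Z₁ = Z₂ ∧ ∃ i₀ : Fin n, ∀ m : Fin n, m ≠ i₀ → W₁ m = W₂ m) ∨
        (W₁ = W₂ ∧ ∃ i₀ : Fin n, ∀ m : Fin n, m ≠ i₀ → Z₁ m = Z₂ m)) →
      (∫ z in cube (Fin dz),
          |(∫ x in cube (Fin dx),
              g (clip κ₁ κ₂ (mKDE K h W₁ (Fin.append x z)) /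
                  clip κ₁ κ₂ (mKDE K h Z₁ z))) -
            ∫ x in cube (Fin dx),
              g (clip κ₁ κ₂ (mKDE K h W₂ (Fin.append x z)) /
                  clip κ₁ κ₂ (mKDE K h Z₂ z))|) ≤ C_V / n := by
  obtain ⟨M, hM⟩ := hg.exists_lipschitzOnWith one_ne_zero (convex_Icc _ _) isCompact_Icc
  have hgM : LipschitzOnWith M g (Icc (κ₁ / κ₂) (κ₂ / κ₁)) :=
    hM.mono (Icc_subset_Icc (div_pos hκ₁ (hκ₁.trans_le hκ)).le le_rfl)
  refine ⟨M * (2 * 3 ^ (dx + dz) * K1 K ^ (dx + dz) / κ₁ +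
    κ₂ * (2 * 3 ^ dz * K1 K ^ dz) / κ₁ ^ 2), fun n hn h hh W₁ W₂ Z₁ Z₂ hdiff => ?_⟩
  obtain ⟨⟨i, hW⟩, ⟨j, hZ⟩⟩ :
      (∃ i, ∀ m, m ≠ i → W₁ m = W₂ m) ∧ ∃ j, ∀ m, m ≠ j → Z₁ m = Z₂ m := by
    rcases hdiff with ⟨rfl, hW⟩ | ⟨rfl, hZ⟩
    · exact ⟨hW, ⟨0, hn⟩, fun _ _ => rfl⟩
    · exact ⟨⟨⟨0, hn⟩, fun _ _ => rfl⟩, hZ⟩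
  have hκ₂ : 0 ≤ κ₂ := (hκ₁.trans_le hκ).le
  calc _ ≤ M * ((∫ y, |mKDE K h W₁ y - mKDE K h W₂ y|) / κ₁ +
          κ₂ * (∫ z, |mKDE K h Z₁ z - mKDE K h Z₂ z|) / κ₁ ^ 2) :=
        integral_abs_innerFunctional_sub_le hκ₁ hκ hgM (measurable_mKDE hKm h W₁)
          (measurable_mKDE hKm h W₂) ((integrable_mKDE hKi hh.ne' W₁).sub
            (integrable_mKDE hKi hh.ne' W₂)) ((integrable_mKDE hKi hh.ne' Z₁).sub
            (integrable_mKDE hKi hh.ne' Z₂))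
    _ ≤ M * ((2 * 3 ^ (dx + dz) * K1 K ^ (dx + dz) / n) / κ₁ +
          κ₂ * (2 * 3 ^ dz * K1 K ^ dz / n) / κ₁ ^ 2) := by
        gcongr _ * (?_ / _ + _ * ?_ / _)
        · simpa using integral_abs_mKDE_sub_mKDE_le hKi hh hW
        · simpa using integral_abs_mKDE_sub_mKDE_le hKi hh hZ
    _ = _ := by ring
end
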